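/- arXiv:1510.06691 — 6 statements merged into one kernel-verified Lean document; each statement's English description precedes it below -/
import Mathlib

section
/- Fix an integer k ≥ 1. Let (t_n)_{n≥1} be a sequence of and/or tree shapes whose saturation levels tend to infinity. Then the probability that the uniform random k-labelling of t_n computes a constant function tends to 1 as n → ∞; moreover P_k[t_n](True) = P_k[t_n](False) for every n, so both probabilities converge to 1/2. -/
/-- A plane rooted tree (shape of an and/or tree). -/
inductive PTree where
  | leaf : PTree
  | node : List PTree → PTree

/-- An and/or tree shape: every internal node has at least two children. -/
inductive IsShape : PTree → Prop
  | leaf : IsShape .leaf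
  | node (cs : List PTree) : 2 ≤ cs.length → (∀ c ∈ cs, IsShape c) → IsShape (.node cs)

/-- The size of a shape: its number of leaves. -/
def PTree.size : PTree → ℕ
  | .leaf => 1
  | .node cs => (cs.attach.map (fun ⟨c, _⟩ => c.size)).sum
decreasing_by
  have := List.sizeOf_lt_of_mem ‹c ∈ cs›; simp only [PTree.node.sizeOf_spec]; omega

/-- The saturation level of a shape: the minimal depth of a leaf. -/
def PTree.satLevel : PTree → ℕ
  | .leaf => 0
  | .node cs => ((cs.attach.map (fun ⟨c, _⟩ => c.satLevel)).min?.getD 0) + 1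
decreasing_by
  have := List.sizeOf_lt_of_mem ‹c ∈ cs›; simp only [PTree.node.sizeOf_spec]; omega

/-- A `k`-labelled and/or tree: internal nodes carry a connective
(`true` = ∧, `false` = ∨), leaves carry a literal: a variable index in `Fin k`
together with a polarity (`true` = positive, `false` = negated). -/
inductive LTree (k : ℕ) where
  | leaf : Fin k → Bool → LTree k
  | node : Bool → List (LTree k) → LTree k

/-- Evaluation of a labelled and/or tree, with the convention that a childless
internal node labelled ∧ (resp. ∨) evaluates to `false` (resp. `true`). -/
def LTree.eval {k : ℕ} : LTree k → (Fin k → Bool) → Bool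
  | .leaf i pos, x => if pos then x i else !(x i)
  | .node c cs, x =>
    if cs.isEmpty then !c
    else if c then (cs.attach.map (fun ⟨t, _⟩ => t.eval x)).all (fun b => b)
    else (cs.attach.map (fun ⟨t, _⟩ => t.eval x)).any (fun b => b)
decreasing_by
  all_goals (have := List.sizeOf_lt_of_mem ‹t ∈ cs›; simp only [LTree.node.sizeOf_spec]; omega)

/-- A valid labelled and/or tree: every internal node has at least two children. -/
inductive IsLShape {k : ℕ} : LTree k → Prop
  | leaf (i : Fin k) (pos : Bool) : IsLShape (.leaf i pos)
  | node (c : Bool) (cs : List (LTree k)) : 2 ≤ cs.length →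
      (∀ t ∈ cs, IsLShape t) → IsLShape (.node c cs)

/-- The size of a labelled tree: its number of leaves. -/
def LTree.size {k : ℕ} : LTree k → ℕ
  | .leaf _ _ => 1
  | .node _ cs => (cs.attach.map (fun ⟨t, _⟩ => t.size)).sum
decreasing_by
  have := List.sizeOf_lt_of_mem ‹t ∈ cs›; simp only [LTree.node.sizeOf_spec]; omega

/-- The list of leaf labels of a labelled tree. -/
def LTree.leaves {k : ℕ} : LTree k → List (Fin k × Bool)
  | .leaf i pos => [(i, pos)]
  | .node _ cs => (cs.attach.map (fun ⟨t, _⟩ => t.leaves)).flatten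
decreasing_by
  have := List.sizeOf_lt_of_mem ‹t ∈ cs›; simp only [LTree.node.sizeOf_spec]; omega

/-- The list of all `k`-labellings of a given shape (each one equally likely
under the uniform random labelling). -/
def labellings (k : ℕ) : PTree → List (LTree k)
  | .leaf => (List.finRange k).flatMap (fun i => [LTree.leaf i true, LTree.leaf i false])
  | .node cs => [true, false].flatMap (fun c =>
      ((cs.attach.map (fun ⟨t, _⟩ => labellings k t)).sections).map (fun l => LTree.node c l))
decreasing_by
  have := List.sizeOf_lt_of_mem ‹t ∈ cs›; simp only [PTree.node.sizeOf_spec]; omega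

open Classical in
/-- The probability that the uniform random `k`-labelling of the shape `t`
computes a Boolean function belonging to the set `s`. -/
noncomputable def Pr (k : ℕ) (t : PTree) (s : Set ((Fin k → Bool) → Bool)) : ℝ :=
  (((labellings k t).filter (fun τ => decide (τ.eval ∈ s))).length : ℝ)
    / ((labellings k t).length : ℝ)

/-- `Pfun k t g` = `P_k[t](g)`: the probability that the uniform random
`k`-labelling of the shape `t` computes exactly the Boolean function `g`. -/
noncomputable def Pfun (k : ℕ) (t : PTree) (g : (Fin k → Bool) → Bool) : ℝ :=
  Pr k t {g}

/-- `x_i` is an essential variable of `f`. -/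
def Essential {k : ℕ} (f : (Fin k → Bool) → Bool) (i : Fin k) : Prop :=
  ∃ x : Fin k → Bool, f (Function.update x i true) ≠ f (Function.update x i false)

open Classical in
/-- The number of essential variables of `f`. -/
noncomputable def essCount {k : ℕ} (f : (Fin k → Bool) → Bool) : ℕ :=
  (Finset.univ.filter (fun i => Essential f i)).card

open Classical in
/-- The complexity `L(f)`: the minimal number of leaves of a valid `k`-labelled
and/or tree computing `f`, with the convention `L(True) = L(False) = 0`. -/
noncomputable def complexity (k : ℕ) (f : (Fin k → Bool) → Bool) : ℕ :=
  if f = (fun _ => true) ∨ f = (fun _ => false) then 0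
  else sInf {n | ∃ τ : LTree k, IsLShape τ ∧ τ.eval = f ∧ τ.size = n}

/-!
Flipping every connective and every literal (the De Morgan dual) permutes the labellings of a
shape and negates the computed function; hence `P(True) = P(False)`, and for each input `x` the
value `f(x)` is a fair coin. For two inputs `x, y` let `d(t)` be the probability that
`f(x) ≠ f(y)`. The children of a node are labelled independently, so a node with `m ≥ 2`
children has `d = 2^(1-m) (1 - ∏ (1 - dᵢ))`, which is at most `e - e²/2` when every `dᵢ ≤ e`;
by induction `d(t) ≤ 2 / (s + 2)`, where `s` is the saturation level. A labelled tree computes a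
non-constant function only if it separates some input from the all-true input, so the union bound
gives `P(constant) ≥ 1 - 2^k · 2 / (s + 2)`.
-/

namespace List

variable {α β ι : Type*}

theorem countP_or_add_countP_and (l : List α) (p q : α → Bool) :
    l.countP (fun a => p a || q a) + l.countP (fun a => p a && q a) = l.countP p + l.countP q := by
  induction l with
  | nil => rfl
  | cons a l ih => simp only [countP_cons]; cases p a <;> cases q a <;> simp <;> omega

theorem countP_bne_add_two_mul_countP_and (l : List α) (p q : α → Bool) :
    l.countP (fun a => p a != q a) + 2 * l.countP (fun a => p a && q a)
      = l.countP p + l.countP q := by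
  induction l with
  | nil => rfl
  | cons a l ih => simp only [countP_cons]; cases p a <;> cases q a <;> simp <;> omega

theorem countP_le_sum_countP {l : List α} {p : α → Bool} (s : Finset ι) (q : ι → α → Bool)
    (h : ∀ a ∈ l, p a = true → ∃ i ∈ s, q i a = true) :
    l.countP p ≤ ∑ i ∈ s, l.countP (q i) := by
  induction l with
  | nil => simp
  | cons a l ih =>
    simp only [countP_cons, Finset.sum_add_distrib]
    refine add_le_add (ih fun b hb => h b (mem_cons_of_mem a hb)) ?_
    by_cases hp : p a
    · obtain ⟨i, hi, hqi⟩ := h a mem_cons_self hp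
      simpa [hp, hqi] using Finset.single_le_sum (f := fun j => if q j a then 1 else 0)
        (fun _ _ => Nat.zero_le _) hi
    · simp [hp]

noncomputable def freq (l : List α) (p : α → Bool) : ℝ :=
  (l.countP p : ℝ) / l.length

theorem freq_nonneg (l : List α) (p : α → Bool) : 0 ≤ l.freq p := by
  unfold freq; positivity

theorem freq_le_one (l : List α) (p : α → Bool) : l.freq p ≤ 1 :=
  div_le_one_of_le₀ (mod_cast countP_le_length) (Nat.cast_nonneg _)

theorem freq_congr {l : List α} {p q : α → Bool} (h : ∀ a ∈ l, p a = q a) :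
    l.freq p = l.freq q := by
  rw [freq, freq, countP_congr fun a ha => by rw [h a ha]]

theorem Perm.freq_eq {l l' : List α} (h : l ~ l') (p : α → Bool) : l.freq p = l'.freq p := by
  rw [freq, freq, h.countP_eq, h.length_eq]

theorem freq_map (f : β → α) (l : List β) (p : α → Bool) :
    (l.map f).freq p = l.freq (p ∘ f) := by
  rw [freq, freq, countP_map, length_map]

theorem freq_append_map_of_comp_eq {f : α → α} {p : α → Bool} (hf : p ∘ f = p) (l : List α) :
    (l ++ l.map f).freq p = l.freq p := by
  rw [freq, freq, countP_append, countP_map, hf, length_append, length_map]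
  push_cast
  rw [← two_mul, ← two_mul, mul_div_mul_left _ _ two_ne_zero]

theorem freq_add_freq_not {l : List α} (hl : l ≠ []) (p : α → Bool) :
    l.freq p + l.freq (fun a => !p a) = 1 := by
  have hlen : (l.length : ℝ) ≠ 0 := by simpa using hl
  rw [freq, freq, ← add_div, div_eq_one_iff_eq hlen]
  norm_cast
  rw [length_eq_countP_add_countP p]
  simp

theorem freq_or_of_disjoint {l : List α} {p q : α → Bool}
    (h : ∀ a ∈ l, p a = true → q a = false) :
    l.freq (fun a => p a || q a) = l.freq p + l.freq q := by
  have hand : l.countP (fun a => p a && q a) = 0 := countP_eq_zero.2 fun a ha => by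
    cases hp : p a <;> simp [hp, h a ha]
  have hor := countP_or_add_countP_and l p q
  have hcount : l.countP (fun a => p a || q a) = l.countP p + l.countP q := by omega
  rw [freq, freq, freq, ← add_div, hcount]
  push_cast; rfl

theorem freq_bne (l : List α) (p q : α → Bool) :
    l.freq (fun a => p a != q a) = l.freq p + l.freq q - 2 * l.freq (fun a => p a && q a) := by
  rw [freq, freq, freq, freq, eq_sub_iff_add_eq, mul_div_assoc', ← add_div, ← add_div]
  exact_mod_cast congrArg (fun n : ℕ => (n : ℝ) / l.length)
    (countP_bne_add_two_mul_countP_and l p q)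

theorem freq_le_sum_freq {l : List α} {p : α → Bool} (s : Finset ι) (q : ι → α → Bool)
    (h : ∀ a ∈ l, p a = true → ∃ i ∈ s, q i a = true) :
    l.freq p ≤ ∑ i ∈ s, l.freq (q i) := by
  simp only [freq, ← Finset.sum_div]
  gcongr
  exact_mod_cast countP_le_sum_countP s q h

theorem one_sub_sum_freq_le_freq {l : List α} (hl : l ≠ []) {p : α → Bool} (s : Finset ι)
    (q : ι → α → Bool) (h : ∀ a ∈ l, p a = false → ∃ i ∈ s, q i a = true) :
    1 - ∑ i ∈ s, l.freq (q i) ≤ l.freq p := by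
  have hsplit := freq_add_freq_not hl p
  have hunion := freq_le_sum_freq (p := fun a => !p a) s q fun a ha hpa =>
    h a ha (by simpa using hpa)
  linarith

theorem countP_sections_all (p : α → Bool) :
    ∀ M : List (List α), M.sections.countP (·.all p) = (M.map (·.countP p)).prod
  | [] => rfl
  | l :: M => by
    have hcons : ∀ s : List α, (l.map (· :: s)).countP (·.all p)
        = if s.all p then l.countP p else 0 := by
      intro s; cases h : s.all p <;> simp [Function.comp_def, h]
    have hsum : ∀ S : List (List α),
        (S.map fun s => if s.all p then l.countP p else 0).sum
          = S.countP (·.all p) * l.countP p := by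
      intro S; induction S with
      | nil => simp
      | cons s S ih =>
        rw [map_cons, sum_cons, ih, countP_cons]
        cases s.all p <;> simp [add_mul, add_comm]
    rw [sections, countP_flatMap, map_cons, prod_cons, ← countP_sections_all p M, mul_comm,
      ← hsum]
    exact congrArg sum (map_congr_left fun s _ => hcons s)

theorem length_sections (M : List (List α)) : M.sections.length = (M.map length).prod := by
  rw [← (countP_eq_length (p := (·.all fun _ => true))).2 (by simp), countP_sections_all]
  simp

theorem prod_map_div {G : Type*} [DivisionCommMonoid G] (M : List β) (f g : β → G) :
    (M.map fun a => f a / g a).prod = (M.map f).prod / (M.map g).prod := by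
  simpa using Multiset.prod_map_div (m := (M : Multiset β)) (f := f) (g := g)

theorem freq_sections_all (p : α → Bool) (M : List (List α)) :
    M.sections.freq (·.all p) = (M.map (·.freq p)).prod := by
  simp only [freq, countP_sections_all, length_sections, Nat.cast_list_prod, map_map]
  exact (prod_map_div M _ _).symm

theorem freq_sections_all_bne (u v : α → Bool) (M : List (List α)) :
    M.sections.freq (fun s => s.all u != s.all v)
      = (M.map (·.freq u)).prod + (M.map (·.freq v)).prod
        - 2 * (M.map (·.freq fun a => u a && v a)).prod := by
  rw [freq_bne, ← freq_sections_all, ← freq_sections_all, ← freq_sections_all]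
  congr 3
  funext s
  induction s with
  | nil => rfl
  | cons a s ih => simp only [all_cons, ← ih]; cases u a <;> cases v a <;> simp

theorem sections_map (f : α → β) :
    ∀ M : List (List α), (M.map (map f)).sections = M.sections.map (map f)
  | [] => rfl
  | l :: M => by simp [sections, sections_map f M, map_flatMap, flatMap_map, Function.comp_def]

theorem Forall₂.sections_perm {M M' : List (List α)} (h : Forall₂ Perm M M') :
    M.sections ~ M'.sections := by
  induction h with
  | nil => exact Perm.refl _
  | cons hl _ ih => exact ih.flatMap fun s _ => hl.map _

end List

theorem four_mul_one_sub_pow_le {q : ℝ} (hq0 : 0 ≤ q) (hq1 : q ≤ 1) {m : ℕ} (hm : 2 ≤ m) :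
    4 * (1 - q ^ m) ≤ 2 ^ m * (1 - q ^ 2) := by
  induction m, hm using Nat.le_induction with
  | base => norm_num
  | succ m hm ih =>
    have hqm : q ^ m ≤ q := pow_le_of_le_one hq0 hq1 (by omega)
    have : q ^ m * (2 - q) ≤ 1 := by nlinarith [pow_nonneg hq0 m]
    rw [pow_succ, pow_succ]; nlinarith

theorem two_div_sub_sq_div_two_le {N : ℝ} (hN : 0 ≤ N) :
    2 / (N + 1) - (2 / (N + 1)) ^ 2 / 2 ≤ 2 / (N + 2) := by
  have h : 2 / (N + 1) - (2 / (N + 1)) ^ 2 / 2 = 2 * N / (N + 1) ^ 2 := by field_simp; ring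
  rw [h, div_le_div_iff₀ (by positivity) (by positivity)]
  nlinarith

theorem PTree.satLevel_node_le_succ {cs : List PTree} {c : PTree} (hc : c ∈ cs) :
    (PTree.node cs).satLevel ≤ c.satLevel + 1 := by
  rw [PTree.satLevel]
  simpa using List.min?_getD_le_of_mem (List.mem_map_of_mem (f := PTree.satLevel) hc)

namespace LTree

variable {k : ℕ}

def dual : LTree k → LTree k
  | .leaf i pos => .leaf i (!pos)
  | .node c cs => .node (!c) (cs.attach.map fun ⟨τ, _⟩ => dual τ)
decreasing_by
  have := List.sizeOf_lt_of_mem ‹τ ∈ cs›; simp only [LTree.node.sizeOf_spec]; omega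

theorem dual_leaf (i : Fin k) (pos : Bool) : dual (.leaf i pos) = .leaf i (!pos) := by
  rw [dual]

theorem dual_node (c : Bool) (cs : List (LTree k)) :
    dual (.node c cs) = .node (!c) (cs.map dual) := by
  rw [dual]; simp

theorem eval_node_of_ne_nil (c : Bool) {cs : List (LTree k)} (hcs : cs ≠ []) (x : Fin k → Bool) :
    (LTree.node c cs).eval x = if c then cs.all (·.eval x) else cs.any (·.eval x) := by
  rw [eval]
  simp [hcs, List.all_map, List.any_map, Function.comp_def]

theorem eval_dual : ∀ (τ : LTree k) (x : Fin k → Bool), τ.dual.eval x = !τ.eval x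
  | .leaf i pos, x => by cases pos <;> simp [dual_leaf, eval]
  | .node c cs, x => by
    rcases eq_or_ne cs [] with rfl | hcs
    · simp [dual_node, eval]
    have hvals : (cs.map dual).map (·.eval x) = cs.map fun σ => !σ.eval x := by
      rw [List.map_map]; exact List.map_congr_left fun σ _ => eval_dual σ x
    have hall : (cs.map dual).all (·.eval x) = cs.all fun σ => !σ.eval x := by
      simpa [List.all_map, Function.comp_def] using congrArg (·.all id) hvals
    have hany : (cs.map dual).any (·.eval x) = cs.any fun σ => !σ.eval x := by
      simpa [List.any_map, Function.comp_def] using congrArg (·.any id) hvals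
    rw [dual_node, eval_node_of_ne_nil _ (by simpa using hcs), eval_node_of_ne_nil _ hcs, hall,
      hany]
    cases c
    · exact List.not_any_eq_all_not.symm
    · simp only [List.all_eq_not_any_not (l := cs), Bool.not_not, Bool.not_true, if_true,
        Bool.false_eq_true, if_false]
decreasing_by
  have := List.sizeOf_lt_of_mem ‹σ ∈ cs›; simp only [LTree.node.sizeOf_spec]; omega

end LTree

section

variable {k : ℕ}

theorem labellings_leaf :
    labellings k .leaf = (List.finRange k).flatMap fun i => [.leaf i true, .leaf i false] := by
  rw [labellings]

theorem labellings_node (cs : List PTree) :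
    labellings k (.node cs) = (cs.map (labellings k)).sections.map (.node true)
      ++ (cs.map (labellings k)).sections.map (.node false) := by
  rw [labellings]; simp

theorem labellings_ne_nil (hk : 0 < k) : ∀ t : PTree, labellings k t ≠ []
  | .leaf => by
    have : Nonempty (Fin k) := ⟨⟨0, hk⟩⟩
    simp [labellings_leaf, List.flatMap_eq_nil_iff]
  | .node cs => by
    refine List.ne_nil_of_length_pos ?_
    rw [labellings_node, List.length_append, List.length_map, List.length_sections, List.map_map]
    refine Nat.add_pos_left (List.prod_pos fun n hn => ?_) _
    obtain ⟨c, hc, rfl⟩ := List.mem_map.1 hn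
    exact List.length_pos_iff.2 (labellings_ne_nil hk c)
decreasing_by
  have := List.sizeOf_lt_of_mem ‹c ∈ cs›; simp only [PTree.node.sizeOf_spec]; omega

theorem map_dual_map_node_perm {cs : List PTree}
    (h : ∀ c ∈ cs, ((labellings k c).map LTree.dual).Perm (labellings k c)) (b : Bool) :
    (((cs.map (labellings k)).sections.map (.node b)).map LTree.dual).Perm
      ((cs.map (labellings k)).sections.map (.node !b)) := by
  have hS : ((cs.map (labellings k)).sections.map (List.map LTree.dual)).Perm
      (cs.map (labellings k)).sections := by
    rw [← List.sections_map]
    refine List.Forall₂.sections_perm ?_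
    simp only [List.map_map, List.forall₂_map_left_iff, List.forall₂_map_right_iff]
    exact List.forall₂_same.2 h
  rw [List.map_map]
  convert hS.map (LTree.node !b) using 1
  simp [LTree.dual_node, Function.comp_def]

theorem map_dual_labellings_perm :
    ∀ t : PTree, ((labellings k t).map LTree.dual).Perm (labellings k t)
  | .leaf => by
    rw [labellings_leaf, List.map_flatMap]
    exact List.Perm.flatMap_left _ fun i _ => by simpa [LTree.dual_leaf] using List.Perm.swap _ _ []
  | .node cs => by
    have hnode := map_dual_map_node_perm (cs := cs) fun c _ => map_dual_labellings_perm c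
    rw [labellings_node, List.map_append]
    exact ((hnode true).append (hnode false)).trans List.perm_append_comm
decreasing_by
  have := List.sizeOf_lt_of_mem ‹c ∈ cs›; simp only [PTree.node.sizeOf_spec]; omega

theorem freq_labellings_comp_dual (t : PTree) (p : LTree k → Bool) :
    (labellings k t).freq (p ∘ LTree.dual) = (labellings k t).freq p := by
  rw [← List.freq_map, (map_dual_labellings_perm t).freq_eq]

theorem freq_labellings_eval (hk : 0 < k) (t : PTree) (x : Fin k → Bool) :
    (labellings k t).freq (·.eval x) = 1 / 2 := by
  have hsum := List.freq_add_freq_not (labellings_ne_nil hk t) (·.eval x)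
  have hsymm : (labellings k t).freq (fun τ => !τ.eval x) = (labellings k t).freq (·.eval x) := by
    rw [← freq_labellings_comp_dual]
    exact List.freq_congr fun τ _ => by simp [LTree.eval_dual]
  linarith

noncomputable def disagreement (k : ℕ) (x y : Fin k → Bool) (t : PTree) : ℝ :=
  (labellings k t).freq fun τ => τ.eval x != τ.eval y

theorem freq_labellings_eval_and_eval (hk : 0 < k) (t : PTree) (x y : Fin k → Bool) :
    (labellings k t).freq (fun τ => τ.eval x && τ.eval y) = (1 - disagreement k x y t) / 2 := by
  have := List.freq_bne (labellings k t) (·.eval x) (·.eval y)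
  rw [freq_labellings_eval hk, freq_labellings_eval hk] at this
  rw [disagreement, this]
  ring

theorem disagreement_node (hk : 0 < k) {cs : List PTree} (hcs : cs ≠ []) (x y : Fin k → Bool) :
    disagreement k x y (.node cs)
      = 2 * (1 / 2) ^ cs.length * (1 - (cs.map fun c => 1 - disagreement k x y c).prod) := by
  set S := (cs.map (labellings k)).sections
  -- the ∨-labellings are the duals of the ∧-labellings, and duality preserves disagreement
  have hperm : (labellings k (.node cs)).Perm
      (S.map (.node true) ++ (S.map (.node true)).map LTree.dual) := by
    rw [labellings_node]
    exact List.Perm.append_left _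
      (map_dual_map_node_perm (fun c _ => map_dual_labellings_perm c) true).symm
  have hinv : (fun τ : LTree k => τ.eval x != τ.eval y) ∘ LTree.dual
      = fun τ => τ.eval x != τ.eval y := by
    funext τ; simp [LTree.eval_dual]
  have hall : ∀ s ∈ S, ((fun τ : LTree k => τ.eval x != τ.eval y) ∘ LTree.node true) s
      = (s.all (·.eval x) != s.all (·.eval y)) := by
    intro s hs
    have : s ≠ [] := by
      rintro rfl
      simpa [eq_comm, hcs] using List.mem_sections_length hs
    simp [LTree.eval_node_of_ne_nil true this]
  rw [disagreement, hperm.freq_eq, List.freq_append_map_of_comp_eq hinv, List.freq_map,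
    List.freq_congr hall, List.freq_sections_all_bne]
  simp only [List.map_map, Function.comp_def, freq_labellings_eval hk,
    freq_labellings_eval_and_eval hk]
  simp only [div_eq_mul_inv _ (2 : ℝ), List.prod_map_mul, List.map_const', List.prod_replicate]
  ring

theorem disagreement_node_le (hk : 0 < k) (x y : Fin k → Bool) {cs : List PTree}
    (hcs : 2 ≤ cs.length) {e : ℝ} (he : e ≤ 1) (h : ∀ c ∈ cs, disagreement k x y c ≤ e) :
    disagreement k x y (.node cs) ≤ e - e ^ 2 / 2 := by
  obtain ⟨c, hc⟩ := List.exists_mem_of_length_pos (by omega : 0 < cs.length)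
  have he0 : 0 ≤ e := (List.freq_nonneg _ _).trans (h c hc)
  have hprod : (1 - e) ^ cs.length ≤ (cs.map fun c => 1 - disagreement k x y c).prod := by
    simpa [List.map_const', List.prod_replicate] using
      List.prod_map_le_prod_map₀ (fun _ => 1 - e) _ (fun _ _ => by linarith)
        fun c hc => by linarith [h c hc]
  have hpow := four_mul_one_sub_pow_le (q := 1 - e) (by linarith) (by linarith) hcs
  have hhalf : (1 / 2 : ℝ) ^ cs.length * 2 ^ cs.length = 1 := by
    rw [← mul_pow]; norm_num
  rw [disagreement_node hk (List.ne_nil_of_length_pos (by omega))]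
  calc 2 * (1 / 2) ^ cs.length * (1 - (cs.map fun c => 1 - disagreement k x y c).prod)
      ≤ 2 * (1 / 2) ^ cs.length * (1 - (1 - e) ^ cs.length) := by gcongr
    _ = (1 / 2) ^ cs.length * (4 * (1 - (1 - e) ^ cs.length)) / 2 := by ring
    _ ≤ (1 / 2) ^ cs.length * (2 ^ cs.length * (1 - (1 - e) ^ 2)) / 2 := by gcongr
    _ = e - e ^ 2 / 2 := by rw [← mul_assoc, hhalf]; ring

theorem disagreement_le (hk : 0 < k) (x y : Fin k → Bool) {t : PTree} (ht : IsShape t) :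
    disagreement k x y t ≤ 2 / (t.satLevel + 2) := by
  induction ht with
  | leaf => simpa [PTree.satLevel, disagreement] using List.freq_le_one _ _
  | node cs hcs _ ih =>
    obtain ⟨M, hM⟩ : ∃ M, (PTree.node cs).satLevel = M + 1 := ⟨_, by rw [PTree.satLevel]⟩
    have hchild : ∀ c ∈ cs, disagreement k x y c ≤ 2 / ((M : ℝ) + 1 + 1) := by
      intro c hc
      refine (ih c hc).trans (div_le_div_of_nonneg_left zero_le_two (by positivity) ?_)
      have := PTree.satLevel_node_le_succ hc
      exact_mod_cast (by omega : M + 1 + 1 ≤ c.satLevel + 2)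
    have he : 2 / ((M : ℝ) + 1 + 1) ≤ 1 := by
      rw [div_le_one (by positivity)]; linarith [M.cast_nonneg (α := ℝ)]
    rw [hM, Nat.cast_succ]
    exact (disagreement_node_le hk x y hcs he hchild).trans
      (two_div_sub_sq_div_two_le (N := (M : ℝ) + 1) (by positivity))

open Classical in
theorem Pr_eq_freq (t : PTree) (s : Set ((Fin k → Bool) → Bool)) :
    Pr k t s = (labellings k t).freq fun τ => decide (τ.eval ∈ s) := by
  rw [Pr, List.freq, List.countP_eq_length_filter]

theorem Pfun_eq_freq (t : PTree) (g : (Fin k → Bool) → Bool) :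
    Pfun k t g = (labellings k t).freq fun τ => decide (τ.eval = g) := by
  rw [Pfun, Pr_eq_freq]
  exact List.freq_congr fun τ _ => by simp

theorem Pfun_true_eq_Pfun_false (t : PTree) :
    Pfun k t (fun _ => true) = Pfun k t (fun _ => false) := by
  rw [Pfun_eq_freq, Pfun_eq_freq, ← freq_labellings_comp_dual]
  refine List.freq_congr fun τ _ => ?_
  simp only [Function.comp_apply, funext_iff, LTree.eval_dual, Bool.not_eq_true']

theorem Pr_constant_eq_add (t : PTree) :
    Pr k t {g | g = (fun _ => true) ∨ g = (fun _ => false)}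
      = Pfun k t (fun _ => true) + Pfun k t (fun _ => false) := by
  rw [Pfun_eq_freq, Pfun_eq_freq, ← List.freq_or_of_disjoint, Pr_eq_freq]
  · exact List.freq_congr fun τ _ => by simp
  · intro τ _ h
    simp_all [funext_iff]

theorem one_sub_le_Pr_constant (hk : 0 < k) {t : PTree} (ht : IsShape t) :
    1 - 2 ^ k * (2 / (t.satLevel + 2))
      ≤ Pr k t {g | g = (fun _ => true) ∨ g = (fun _ => false)} := by
  calc 1 - 2 ^ k * (2 / (t.satLevel + 2))
      ≤ 1 - ∑ y : Fin k → Bool, disagreement k y (fun _ => true) t := by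
        have := Finset.sum_le_sum fun y (_ : y ∈ Finset.univ) =>
          disagreement_le hk y (fun _ => true) ht
        simp only [Finset.sum_const, Finset.card_univ, Fintype.card_fun, Fintype.card_bool,
          Fintype.card_fin, nsmul_eq_mul] at this
        push_cast at this
        linarith
    _ ≤ _ := by
      rw [Pr_eq_freq]
      refine List.one_sub_sum_freq_le_freq (labellings_ne_nil hk t) _ _ fun τ _ hτ => ?_
      by_contra! hall
      have hconst : τ.eval = fun _ => τ.eval fun _ => true := funext fun y => by simpa using hall y
      cases h : τ.eval fun _ => true <;> simp_all

end

/-- Fix `k ≥ 1`. If the saturation levels of a sequence of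
and/or tree shapes tend to infinity, then the probability that the uniform
random `k`-labelling computes a constant function tends to 1; moreover
`P_k[t_n](True) = P_k[t_n](False)` for every `n`, so both tend to `1/2`. -/
theorem andor_saturation_degenerate (k : ℕ) (hk : 1 ≤ k) (t : ℕ → PTree)
    (ht : ∀ n, IsShape (t n))
    (hsat : Filter.Tendsto (fun n => (t n).satLevel) Filter.atTop Filter.atTop) :
    Filter.Tendsto
        (fun n => Pr k (t n) {g | g = (fun _ => true) ∨ g = (fun _ => false)})
        Filter.atTop (nhds 1)
      ∧ (∀ n, Pfun k (t n) (fun _ => true) = Pfun k (t n) (fun _ => false))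
      ∧ Filter.Tendsto (fun n => Pfun k (t n) (fun _ => true)) Filter.atTop (nhds (1/2))
      ∧ Filter.Tendsto (fun n => Pfun k (t n) (fun _ => false)) Filter.atTop (nhds (1/2)) := by
  have hbound : Filter.Tendsto (fun n => 1 - 2 ^ k * (2 / ((t n).satLevel + 2 : ℝ)))
      Filter.atTop (nhds 1) := by
    have h : Filter.Tendsto (fun n => ((t n).satLevel : ℝ) + 2) Filter.atTop Filter.atTop :=
      Filter.tendsto_atTop_add_const_right _ 2 (tendsto_natCast_atTop_atTop.comp hsat)
    simpa using ((tendsto_const_nhds (x := (2 : ℝ))).div_atTop h).const_mul (2 ^ k) |>.const_sub 1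
  have hconst := tendsto_of_tendsto_of_tendsto_of_le_of_le hbound tendsto_const_nhds
    (fun n => one_sub_le_Pr_constant hk (ht n))
    (fun n => (Pr_eq_freq _ _).trans_le (List.freq_le_one _ _))
  have hhalf (n : ℕ) : Pfun k (t n) (fun _ => true)
      = Pr k (t n) {g | g = (fun _ => true) ∨ g = (fun _ => false)} / 2 := by
    rw [Pr_constant_eq_add, Pfun_true_eq_Pfun_false]; ring
  refine ⟨hconst, fun n => Pfun_true_eq_Pfun_false _, ?_, ?_⟩
  · exact (hconst.div_const 2).congr fun n => (hhalf n).symm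
  · exact (hconst.div_const 2).congr fun n => (hhalf n).symm.trans (Pfun_true_eq_Pfun_false _)
end

section
/- Let f be a k-variable Boolean function with γ = Ess(f) essential variables. Then the set of Boolean functions { f ∘ π : π a permutation of {1,…,k} }, where (f ∘ π)(x_1,…,x_k) := f(x_{π(1)},…,x_{π(k)}), has cardinality at least the binomial coefficient C(k, γ). -/
/- The essential variables of `f ∘ π` are the image under `π` of those of `f`, and any two
subsets of `Fin k` of the same size are related by a permutation. So the map
`g ↦ {essential variables of g}` sends the permutation orbit of `f` onto the `Ess(f)`-element
subsets of `Fin k`. -/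

section

variable {k : ℕ} (f : (Fin k → Bool) → Bool)

def permOrbit : Set ((Fin k → Bool) → Bool) :=
  {g | ∃ π : Equiv.Perm (Fin k), g = fun x => f (fun i => x (π i))}

open Classical in
noncomputable def essentialVars : Finset (Fin k) :=
  Finset.univ.filter (Essential f)

theorem card_essentialVars : (essentialVars f).card = essCount f :=
  rfl

theorem essential_comp_perm_iff (π : Equiv.Perm (Fin k)) (j : Fin k) :
    Essential (fun x => f (fun i => x (π i))) j ↔ Essential f (π.symm j) := by
  have update_comp (x : Fin k → Bool) (b : Bool) :
      (fun i => Function.update x j b (π i)) = Function.update (fun i => x (π i)) (π.symm j) b :=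
    Function.update_comp_equiv x π j b
  constructor
  · rintro ⟨x, hx⟩
    exact ⟨fun i => x (π i), by simpa only [update_comp] using hx⟩
  · rintro ⟨y, hy⟩
    refine ⟨fun i => y (π.symm i), ?_⟩
    simpa only [update_comp, Equiv.symm_apply_apply] using hy

theorem essentialVars_comp_perm (π : Equiv.Perm (Fin k)) :
    essentialVars (fun x => f (fun i => x (π i))) = (essentialVars f).map π.toEmbedding := by
  ext j
  simp only [essentialVars, Finset.mem_map_equiv, Finset.mem_filter, Finset.mem_univ, true_and,
    essential_comp_perm_iff]

theorem image_essentialVars_permOrbit :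
    essentialVars '' permOrbit f = Set.powersetCard (Fin k) (essCount f) := by
  ext S
  rw [Set.powersetCard.mem_iff, ← card_essentialVars]
  constructor
  · rintro ⟨_, ⟨π, rfl⟩, rfl⟩
    rw [essentialVars_comp_perm, Finset.card_map]
  · intro hS
    obtain ⟨π, hπ⟩ := Equiv.Perm.exists_map_finset_eq _ _ hS.symm
    exact ⟨_, ⟨π, rfl⟩, by rw [essentialVars_comp_perm, hπ]⟩

end

/-- If `f` has `γ = Ess(f)` essential variables, then the set
`{f ∘ π : π a permutation of the k variables}` has cardinality at least the
binomial coefficient `C(k, γ)`. -/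
theorem perm_orbit_card_lower_bound (k : ℕ) (f : (Fin k → Bool) → Bool) :
    k.choose (essCount f)
      ≤ Set.ncard {g : (Fin k → Bool) → Bool |
          ∃ π : Equiv.Perm (Fin k), g = fun x => f (fun i => x (π i))} :=
  calc k.choose (essCount f)
      = (Set.powersetCard (Fin k) (essCount f)).ncard := by
        rw [← Nat.card_coe_set_eq, Set.powersetCard.card, Nat.card_eq_fintype_card,
          Fintype.card_fin]
    _ = (essentialVars '' permOrbit f).ncard := by rw [image_essentialVars_permOrbit]
    _ ≤ (permOrbit f).ncard := Set.ncard_image_le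
end

section
/- For every finite k-labelled and/or tree τ, the trimmed tree trim(τ) computes the same k-variable Boolean function as τ. -/
/-- A constraint set is consistent if some assignment of the variables
satisfies every constraint `x_{p.1} = p.2` in it. -/
def ConsistentC {k : ℕ} (C : List (Fin k × Bool)) : Prop :=
  ∃ x : Fin k → Bool, ∀ p ∈ C, x p.1 = p.2

/-- The constraints contributed by the leaf-children of an internal node
labelled by the connective `c`: for a leaf labelled by the literal `ℓ`, the
constraint is `{ℓ = True}` if `c = ∧` and `{ℓ = False}` if `c = ∨`. -/
def leafConstraints {k : ℕ} (c : Bool) (cs : List (LTree k)) :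
    List (Fin k × Bool) :=
  cs.filterMap (fun t => match t with
    | .leaf i pos => some (i, if c then pos else !pos)
    | _ => none)

open Classical in
/-- The trimming procedure: `trimAux C τ` trims the tree `τ` whose root has
(consistent) constraint set `C`.  All the children of a node `u` share the
same constraint set, namely that of `u` enlarged by the constraints coming
from the leaf-children of `u`; they are kept iff this set is consistent. -/
noncomputable def trimAux {k : ℕ} (C : List (Fin k × Bool)) : LTree k → LTree k
  | .leaf i pos => .leaf i pos
  | .node c cs =>
      if ConsistentC (C ++ leafConstraints c cs)
      then .node c (cs.attach.map (fun ⟨t, _⟩ => trimAux (C ++ leafConstraints c cs) t))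
      else .node c []
decreasing_by
  have := List.sizeOf_lt_of_mem ‹t ∈ cs›; simp only [LTree.node.sizeOf_spec]; omega

/-- `trim(τ)`: the subtree of `τ` induced on the consistent nodes (the root
having the empty constraint set), keeping the labels; recall that `eval`
already incorporates the convention that an internal node deprived of all its
children evaluates to `False` if labelled ∧ and to `True` if labelled ∨. -/
noncomputable def LTree.trim {k : ℕ} (τ : LTree k) : LTree k := trimAux [] τ

lemma map_attach_map {α β : Type*} (l : List α) (g : α → α) (e : α → β) :
    ((l.attach.map (fun ⟨t, _⟩ => g t)).attach.map (fun ⟨t, _⟩ => e t))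
      = l.map (fun t => e (g t)) := by
  simp [List.map_map]

lemma attach_map' {α β : Type*} (l : List α) (e : α → β) :
    l.attach.map (fun ⟨t, _⟩ => e t) = l.map e := by simp

lemma absorb (c : Bool) (l : List Bool) (h : (!c) ∈ l) :
    (if c then l.all (fun b => b) else l.any (fun b => b)) = !c := by
  cases c <;> simp_all

lemma node_eval_of_mem {k : ℕ} (c : Bool) (cs : List (LTree k)) (x : Fin k → Bool)
    (hne : cs ≠ []) (t : LTree k) (ht : t ∈ cs) (hev : t.eval x = !c) :
    (LTree.node c cs).eval x = !c := by
  rw [LTree.eval]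
  have hE : cs.isEmpty = false := by simpa using hne
  rw [hE]
  simp only [Bool.false_eq_true, if_false]
  have hmap : cs.attach.map (fun ⟨t, _⟩ => t.eval x) = cs.map (fun t => t.eval x) := by simp
  rw [hmap]
  exact absorb c _ (List.mem_map.mpr ⟨t, ht, hev⟩)

lemma leaf_eval_violate {k : ℕ} (c pos : Bool) (i : Fin k) (x : Fin k → Bool)
    (h : x i ≠ (if c then pos else !pos)) :
    (LTree.leaf i pos).eval x = !c := by
  rw [LTree.eval]
  cases c <;> cases pos <;> simp_all

lemma trimAux_eval {k : ℕ} (τ : LTree k) (hτ : IsLShape τ) :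
    ∀ (C : List (Fin k × Bool)) (x : Fin k → Bool),
      (∀ p ∈ C, x p.1 = p.2) → (trimAux C τ).eval x = τ.eval x := by
  induction hτ with
  | leaf i pos => intro C x hx; rw [trimAux]
  | node c cs hlen hcs ih =>
    intro C x hx
    have hne : cs ≠ [] := by rintro rfl; simp at hlen
    rw [trimAux]
    by_cases hcon : ConsistentC (C ++ leafConstraints c cs)
    · rw [if_pos hcon]
      by_cases hall : ∀ p ∈ leafConstraints c cs, x p.1 = p.2
      · -- all leaf constraints satisfied, use IH on each child
        have hx' : ∀ p ∈ C ++ leafConstraints c cs, x p.1 = p.2 := by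
          intro p hp
          rcases List.mem_append.mp hp with h | h
          · exact hx p h
          · exact hall p h
        rw [LTree.eval, LTree.eval]
        have hmap : (cs.attach.map (fun ⟨t, _⟩ =>
            trimAux (C ++ leafConstraints c cs) t)).attach.map (fun ⟨t, _⟩ => t.eval x)
            = cs.attach.map (fun ⟨t, _⟩ => t.eval x) := by
          rw [map_attach_map cs (trimAux (C ++ leafConstraints c cs)) (fun t => t.eval x),
            attach_map' cs (fun t => t.eval x)]
          apply List.map_congr_left
          intro t ht
          exact ih t ht (C ++ leafConstraints c cs) x hx'
        have hE : (cs.attach.map (fun ⟨t, _⟩ =>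
            trimAux (C ++ leafConstraints c cs) t)).isEmpty = cs.isEmpty := by
          cases cs <;> simp
        rw [hE, hmap]
      · -- some leaf constraint violated: both sides evaluate to !c
        push_neg at hall
        obtain ⟨p, hp, hviol⟩ := hall
        rw [leafConstraints, List.mem_filterMap] at hp
        obtain ⟨t, ht, hmatch⟩ := hp
        match t, hmatch with
        | .leaf i pos, hmatch =>
          simp only [Option.some.injEq] at hmatch
          subst hmatch
          have hlev : (LTree.leaf i pos).eval x = !c :=
            leaf_eval_violate c pos i x hviol
          have h1 : (LTree.node c cs).eval x = !c :=
            node_eval_of_mem c cs x hne _ ht hlev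
          have hmem : LTree.leaf i pos ∈ cs.attach.map (fun ⟨t, _⟩ =>
              trimAux (C ++ leafConstraints c cs) t) := by
            have : cs.attach.map (fun ⟨t, _⟩ =>
                trimAux (C ++ leafConstraints c cs) t)
                = cs.map (fun t => trimAux (C ++ leafConstraints c cs) t) := by simp
            rw [this, List.mem_map]
            exact ⟨LTree.leaf i pos, ht, by rw [trimAux]⟩
          have hne' : cs.attach.map (fun ⟨t, _⟩ =>
              trimAux (C ++ leafConstraints c cs) t) ≠ [] := by
            intro h; apply hne; simpa using congrArg List.length h
          rw [h1]
          exact node_eval_of_mem c _ x hne' _ hmem hlev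
    · rw [if_neg hcon]
      -- inconsistent: original node also evaluates to !c
      have hex : ∃ p ∈ leafConstraints c cs, x p.1 ≠ p.2 := by
        by_contra h
        push_neg at h
        exact hcon ⟨x, fun p hp => by
          rcases List.mem_append.mp hp with h' | h'
          · exact hx p h'
          · exact h p h'⟩
      obtain ⟨p, hp, hviol⟩ := hex
      rw [leafConstraints, List.mem_filterMap] at hp
      obtain ⟨t, ht, hmatch⟩ := hp
      match t, hmatch with
      | .leaf i pos, hmatch =>
        simp only [Option.some.injEq] at hmatch
        subst hmatch
        have hlev : (LTree.leaf i pos).eval x = !c :=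
          leaf_eval_violate c pos i x hviol
        have h1 : (LTree.node c cs).eval x = !c :=
          node_eval_of_mem c cs x hne _ ht hlev
        rw [h1, LTree.eval]
        simp

/-- For every finite `k`-labelled and/or tree `τ`, the
trimmed tree `trim(τ)` computes the same Boolean function as `τ`. -/
theorem trim_eval_eq (k : ℕ) (τ : LTree k) (hτ : IsLShape τ) :
    τ.trim.eval = τ.eval := by
  funext x
  exact trimAux_eval τ hτ [] x (by simp)
end

section
/- Fix α ∈ (0,1) and define, for integers 1 ≤ k ≤ n−1, q_n^α(k) = [Γ(k−α)Γ(n−k−α)/(Γ(n−α)Γ(1−α))]·[(α/2)·C(n,k) + (1−2α)·C(n−2,k−1)]. Then there exists a constant C = C(α) > 0 such that for every δ ∈ (0,1/2) there exists n_0 with: for all n ≥ n_0, ∑_{k : δn ≤ k ≤ (1−δ)n} q_n^α(k) ≤ C · δ^{−2(α+1)} · n^{−α}. -/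
open scoped Real

/-- The split probability `q_n^α(k)` of Ford's alpha model (case `γ = α` of the
alpha-gamma model): the probability that the `n`-leaf alpha tree has a root
subtree with `k` leaves, for `1 ≤ k ≤ n−1`. -/
noncomputable def qAlpha (α : ℝ) (n k : ℕ) : ℝ :=
  Real.Gamma ((k : ℝ) - α) * Real.Gamma ((n : ℝ) - k - α)
      / (Real.Gamma ((n : ℝ) - α) * Real.Gamma (1 - α))
    * ((α / 2) * (n.choose k : ℝ) + (1 - 2 * α) * ((n - 2).choose (k - 1) : ℝ))

open Real
open scoped Nat

/-- Wendel's upper bound: `Γ(x+s) ≤ Γ(x) x^s` for `x > 0`, `0 ≤ s ≤ 1`. -/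
lemma wendel_upper {x s : ℝ} (hx : 0 < x) (hs0 : 0 ≤ s) (hs1 : s ≤ 1) :
    Real.Gamma (x + s) ≤ Real.Gamma x * x ^ s := by
  have hx1 : (x : ℝ) ∈ Set.Ioi (0:ℝ) := hx
  have hx2 : (x + 1 : ℝ) ∈ Set.Ioi (0:ℝ) := by simpa using by linarith
  have h := Real.convexOn_log_Gamma.2 hx1 hx2 (by linarith : (0:ℝ) ≤ 1 - s) hs0 (by ring)
  have hxs : x + s = (1 - s) • x + s • (x + 1) := by simp [smul_eq_mul]; ring
  rw [← hxs] at h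
  simp only [Function.comp_apply, smul_eq_mul] at h
  have hGx : 0 < Real.Gamma x := Real.Gamma_pos_of_pos hx
  have hGxs : 0 < Real.Gamma (x + s) := Real.Gamma_pos_of_pos (by linarith)
  have := Real.exp_le_exp.mpr h
  rw [Real.exp_log hGxs, Real.exp_add] at this
  calc Real.Gamma (x + s)
      ≤ Real.exp ((1 - s) * Real.log (Real.Gamma x)) *
        Real.exp (s * Real.log (Real.Gamma (x + 1))) := this
    _ = Real.Gamma x * x ^ s := by
        have e1 : Real.exp ((1 - s) * Real.log (Real.Gamma x)) = Real.Gamma x ^ (1 - s) := by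
          rw [Real.rpow_def_of_pos hGx, mul_comm]
        have e2 : Real.exp (s * Real.log (Real.Gamma (x + 1)))
            = Real.Gamma (x + 1) ^ s := by
          rw [Real.rpow_def_of_pos (Real.Gamma_pos_of_pos (by linarith)), mul_comm]
        rw [e1, e2, Real.Gamma_add_one hx.ne', Real.mul_rpow hx.le hGx.le,
          ← mul_assoc, mul_comm (Real.Gamma x ^ (1 - s)) (x ^ s), mul_assoc,
          ← Real.rpow_add hGx]
        norm_num
        ring

lemma rpow_two' {x : ℝ} : x ^ (2:ℝ) = x * x := by
  rw [show (2:ℝ) = ((2:ℕ):ℝ) by norm_num, Real.rpow_natCast]; ring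

/-- `Γ(k-α)/k! ≤ k^{-(1+α)}/(1-α)` for `k ≥ 1`. -/
lemma gamma_ratio_upper {α : ℝ} (hα0 : 0 < α) (hα1 : α < 1) {k : ℕ} (hk : 1 ≤ k) :
    Real.Gamma ((k:ℝ) - α) / (k ! : ℝ) ≤ (k:ℝ) ^ (-(1+α)) / (1 - α) := by
  have hk0 : (0:ℝ) < (k:ℝ) := by exact_mod_cast hk
  have hkα : (0:ℝ) < (k:ℝ) - α := by
    have : (1:ℝ) ≤ (k:ℝ) := by exact_mod_cast hk
    linarith
  have hw : Real.Gamma ((k:ℝ) + (1-α)) ≤ Real.Gamma (k:ℝ) * (k:ℝ) ^ (1-α) :=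
    wendel_upper hk0 (by linarith) (by linarith)
  have hG1 : Real.Gamma ((k:ℝ) + (1-α)) = ((k:ℝ) - α) * Real.Gamma ((k:ℝ) - α) := by
    rw [show (k:ℝ) + (1-α) = ((k:ℝ) - α) + 1 by ring, Real.Gamma_add_one hkα.ne']
  have hGk : Real.Gamma (k:ℝ) = (k ! : ℝ) / (k:ℝ) := by
    have h1 : Real.Gamma ((k:ℝ) + 1) = (k ! : ℝ) := Real.Gamma_nat_eq_factorial k
    rw [Real.Gamma_add_one hk0.ne'] at h1
    field_simp at h1 ⊢
    linarith [h1]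
  have hGpos : 0 < Real.Gamma ((k:ℝ) - α) := Real.Gamma_pos_of_pos hkα
  rw [hG1, hGk] at hw
  -- hw : (k-α) Γ(k-α) ≤ (k!/k) * k^(1-α)
  rw [div_le_div_iff₀ (by positivity) (by linarith)]
  -- goal : Γ(k-α) * (1-α) ≤ k^(-(1+α)) * k!
  have e : (k:ℝ) ^ (-(1+α)) * (k:ℝ) ^ (2:ℝ) = (k:ℝ) ^ (1-α) := by
    rw [← Real.rpow_add hk0]; ring_nf
  have step1 : Real.Gamma ((k:ℝ) - α) * (1 - α) * (k:ℝ)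
      ≤ Real.Gamma ((k:ℝ) - α) * ((k:ℝ) - α) := by
    have hk1 : (1:ℝ) ≤ (k:ℝ) := by exact_mod_cast hk
    have hce : (1 - α) * (k:ℝ) ≤ (k:ℝ) - α := by nlinarith [mul_le_mul_of_nonneg_left hk1 hα0.le]
    nlinarith [hGpos]
  have step2 : Real.Gamma ((k:ℝ) - α) * ((k:ℝ) - α) * (k:ℝ) ≤ (k ! : ℝ) * (k:ℝ) ^ (1-α) := by
    have := mul_le_mul_of_nonneg_right hw hk0.le
    calc Real.Gamma ((k:ℝ) - α) * ((k:ℝ) - α) * (k:ℝ)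
        = ((k:ℝ) - α) * Real.Gamma ((k:ℝ) - α) * (k:ℝ) := by ring
      _ ≤ (k ! : ℝ) / (k:ℝ) * (k:ℝ) ^ (1-α) * (k:ℝ) := this
      _ = (k ! : ℝ) * (k:ℝ) ^ (1-α) := by field_simp
  -- combine: Γ(k-α)(1-α) k^2 ≤ k! k^(1-α) = k! k^(-(1+α)) k^2
  have hk2 : (0:ℝ) < (k:ℝ) * (k:ℝ) := by positivity
  rw [show ((k:ℝ) ^ (-(1+α)) * (k ! : ℝ)) = (k ! : ℝ) * (k:ℝ) ^ (1-α) / ((k:ℝ)*(k:ℝ)) from ?_]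
  · rw [le_div_iff₀ hk2]
    calc Real.Gamma ((k:ℝ) - α) * (1 - α) * ((k:ℝ) * (k:ℝ))
        = (Real.Gamma ((k:ℝ) - α) * (1 - α) * (k:ℝ)) * (k:ℝ) := by ring
      _ ≤ (Real.Gamma ((k:ℝ) - α) * ((k:ℝ) - α)) * (k:ℝ) :=
          mul_le_mul_of_nonneg_right step1 hk0.le
      _ = Real.Gamma ((k:ℝ) - α) * ((k:ℝ) - α) * (k:ℝ) := by ring
      _ ≤ (k ! : ℝ) * (k:ℝ) ^ (1-α) := step2
  · rw [← e, rpow_two']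
    field_simp

/-- `n!/Γ(n-α) ≤ n^{1+α}` for `n ≥ 1`. -/
lemma fact_div_gamma_upper {α : ℝ} (hα0 : 0 < α) (hα1 : α < 1) {n : ℕ} (hn : 1 ≤ n) :
    (n ! : ℝ) / Real.Gamma ((n:ℝ) - α) ≤ (n:ℝ) ^ (1+α) := by
  have hn0 : (0:ℝ) < (n:ℝ) := by exact_mod_cast hn
  have hnα : (0:ℝ) < (n:ℝ) - α := by
    have : (1:ℝ) ≤ (n:ℝ) := by exact_mod_cast hn
    linarith
  have hw : Real.Gamma (((n:ℝ) - α) + α) ≤ Real.Gamma ((n:ℝ) - α) * ((n:ℝ) - α) ^ α :=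
    wendel_upper hnα hα0.le hα1.le
  rw [show ((n:ℝ) - α) + α = (n:ℝ) by ring] at hw
  have hGpos : 0 < Real.Gamma ((n:ℝ) - α) := Real.Gamma_pos_of_pos hnα
  have h2 : ((n:ℝ) - α) ^ α ≤ (n:ℝ) ^ α :=
    Real.rpow_le_rpow (by linarith) (by linarith) hα0.le
  have hfact : (n ! : ℝ) = (n:ℝ) * Real.Gamma (n:ℝ) := by
    rw [← Real.Gamma_add_one hn0.ne', Real.Gamma_nat_eq_factorial]
  rw [div_le_iff₀ hGpos, hfact]
  have e : (n:ℝ) ^ (1+α) = (n:ℝ) * (n:ℝ) ^ α := by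
    rw [Real.rpow_add hn0, Real.rpow_one]
  rw [e]
  calc (n:ℝ) * Real.Gamma (n:ℝ)
      ≤ (n:ℝ) * (Real.Gamma ((n:ℝ) - α) * ((n:ℝ) - α) ^ α) :=
        mul_le_mul_of_nonneg_left hw hn0.le
    _ ≤ (n:ℝ) * (Real.Gamma ((n:ℝ) - α) * (n:ℝ) ^ α) := by
        have := mul_le_mul_of_nonneg_left h2 hGpos.le
        nlinarith
    _ = (n:ℝ) * (n:ℝ) ^ α * Real.Gamma ((n:ℝ) - α) := by ring

/-- Per-term bound on `qAlpha`. -/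
lemma qAlpha_le {α : ℝ} (hα0 : 0 < α) (hα1 : α < 1) {n k : ℕ} (hk : 1 ≤ k)
    (hkn : k + 1 ≤ n) :
    qAlpha α n k ≤ 3 / 2 / ((1 - α) ^ 2 * Real.Gamma (1 - α)) *
      ((k:ℝ) ^ (-(1+α)) * ((n - k : ℕ):ℝ) ^ (-(1+α)) * (n:ℝ) ^ (1+α)) := by
  set m := n - k with hm
  have hm1 : 1 ≤ m := by omega
  have hmk : k + m = n := by omega
  have hmcast : ((m : ℕ):ℝ) = (n:ℝ) - k := by
    rw [hm, Nat.cast_sub (by omega : k ≤ n)]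
  have hG1 : 0 < Real.Gamma (1 - α) := Real.Gamma_pos_of_pos (by linarith)
  have hGk : 0 < Real.Gamma ((k:ℝ) - α) := Real.Gamma_pos_of_pos (by
    have : (1:ℝ) ≤ (k:ℝ) := by exact_mod_cast hk
    linarith)
  have hGm : 0 < Real.Gamma ((m:ℝ) - α) := Real.Gamma_pos_of_pos (by
    have : (1:ℝ) ≤ (m:ℝ) := by exact_mod_cast hm1
    linarith)
  have hGn : 0 < Real.Gamma ((n:ℝ) - α) := Real.Gamma_pos_of_pos (by
    have : (1:ℝ) ≤ (n:ℝ) := by exact_mod_cast (by omega : 1 ≤ n)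
    linarith)
  -- bracket bound
  have hcc : ((n-2).choose (k-1)) ≤ n.choose k := by
    rcases Nat.exists_eq_succ_of_ne_zero (by omega : k ≠ 0) with ⟨k', rfl⟩
    rcases Nat.exists_eq_succ_of_ne_zero (by omega : n ≠ 0) with ⟨n', rfl⟩
    show (n' - 1).choose k' ≤ (n' + 1).choose (k' + 1)
    have h0 : (n' - 1).choose k' ≤ n'.choose k' := Nat.choose_le_choose _ (by omega)
    have h : (n'+1).choose (k'+1) = n'.choose k' + n'.choose (k'+1) :=
      Nat.choose_succ_succ n' k'
    omega
  have hbr : (α/2) * (n.choose k : ℝ) + (1-2*α) * ((n-2).choose (k-1) : ℝ)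
      ≤ (3/2) * (n.choose k : ℝ) := by
    have hb : ((n-2).choose (k-1):ℝ) ≤ (n.choose k:ℝ) := by exact_mod_cast hcc
    have hb0 : (0:ℝ) ≤ ((n-2).choose (k-1):ℝ) := by positivity
    nlinarith [mul_nonneg hb0 hα0.le, mul_nonneg (sub_nonneg.mpr hb) hα0.le,
      mul_nonneg (sub_nonneg.mpr hb) (by linarith : (0:ℝ) ≤ 1 - α)]
  have hq : qAlpha α n k ≤ Real.Gamma ((k:ℝ) - α) * Real.Gamma ((m:ℝ) - α)
      / (Real.Gamma ((n:ℝ) - α) * Real.Gamma (1 - α))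
      * ((3/2) * (n.choose k : ℝ)) := by
    unfold qAlpha
    rw [show (n:ℝ) - k - α = (m:ℝ) - α by rw [hmcast]]
    exact mul_le_mul_of_nonneg_left hbr (by positivity)
  have hch : (n.choose k : ℝ) = (n ! : ℝ) / ((k ! : ℝ) * (m ! : ℝ)) := by
    rw [Nat.cast_choose ℝ (by omega : k ≤ n)]
  have heq : Real.Gamma ((k:ℝ) - α) * Real.Gamma ((m:ℝ) - α)
      / (Real.Gamma ((n:ℝ) - α) * Real.Gamma (1 - α))
      * ((3/2) * ((n ! : ℝ) / ((k ! : ℝ) * (m ! : ℝ))))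
      = 3 / 2 / Real.Gamma (1 - α) *
        (Real.Gamma ((k:ℝ) - α) / (k ! : ℝ) * (Real.Gamma ((m:ℝ) - α) / (m ! : ℝ))
          * ((n ! : ℝ) / Real.Gamma ((n:ℝ) - α))) := by
    field_simp
  have h1 := gamma_ratio_upper hα0 hα1 hk
  have h2 := gamma_ratio_upper hα0 hα1 hm1
  have h3 := fact_div_gamma_upper hα0 hα1 (n := n) (by omega)
  calc qAlpha α n k
      ≤ Real.Gamma ((k:ℝ) - α) * Real.Gamma ((m:ℝ) - α)
        / (Real.Gamma ((n:ℝ) - α) * Real.Gamma (1 - α))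
        * ((3/2) * ((n ! : ℝ) / ((k ! : ℝ) * (m ! : ℝ)))) := by rw [← hch]; exact hq
    _ = 3 / 2 / Real.Gamma (1 - α) *
        (Real.Gamma ((k:ℝ) - α) / (k ! : ℝ) * (Real.Gamma ((m:ℝ) - α) / (m ! : ℝ))
          * ((n ! : ℝ) / Real.Gamma ((n:ℝ) - α))) := heq
    _ ≤ 3 / 2 / Real.Gamma (1 - α) *
        ((k:ℝ) ^ (-(1+α)) / (1-α) * (((m:ℕ):ℝ) ^ (-(1+α)) / (1-α)) * (n:ℝ) ^ (1+α)) := by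
        have hnn : (0:ℝ) ≤ 3 / 2 / Real.Gamma (1 - α) := by positivity
        have h1α : (0:ℝ) < 1 - α := by linarith
        have e1 : (0:ℝ) ≤ Real.Gamma ((m:ℝ) - α) / (m ! : ℝ) :=
          le_of_lt (div_pos hGm (by positivity))
        have e2 : (0:ℝ) ≤ (k:ℝ) ^ (-(1+α)) / (1-α) :=
          div_nonneg (Real.rpow_nonneg (Nat.cast_nonneg k) _) h1α.le
        have e3 : (0:ℝ) ≤ (n ! : ℝ) / Real.Gamma ((n:ℝ) - α) :=
          le_of_lt (div_pos (by positivity) hGn)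
        have e4 : (0:ℝ) ≤ (k:ℝ) ^ (-(1+α)) / (1-α) * (((m:ℕ):ℝ) ^ (-(1+α)) / (1-α)) :=
          mul_nonneg e2 (div_nonneg (Real.rpow_nonneg (Nat.cast_nonneg m) _) h1α.le)
        refine mul_le_mul_of_nonneg_left ?_ hnn
        exact mul_le_mul (mul_le_mul h1 h2 e1 e2) h3 e3 e4
    _ = 3 / 2 / ((1 - α) ^ 2 * Real.Gamma (1 - α)) *
        ((k:ℝ) ^ (-(1+α)) * ((m:ℕ):ℝ) ^ (-(1+α)) * (n:ℝ) ^ (1+α)) := by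
        have h1α : (1:ℝ) - α ≠ 0 := by intro h; linarith [sub_eq_zero.mp h]
        field_simp

/-- For every `α ∈ (0,1)` there is a constant `C > 0` such
that for every `δ ∈ (0,1/2)` there is `n₀` with: for all `n ≥ n₀`,
`∑_{δn ≤ k ≤ (1−δ)n} q_n^α(k) ≤ C · δ^{−2(α+1)} · n^{−α}`. -/
theorem alpha_model_middle_split_bound (α : ℝ) (hα : α ∈ Set.Ioo (0 : ℝ) 1) :
    ∃ C : ℝ, 0 < C ∧ ∀ δ : ℝ, δ ∈ Set.Ioo (0 : ℝ) (1 / 2) → ∃ n₀ : ℕ,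
      ∀ n : ℕ, n₀ ≤ n →
        (∑ k ∈ (Finset.range (n + 1)).filter
            (fun k : ℕ => δ * (n : ℝ) ≤ (k : ℝ) ∧ (k : ℝ) ≤ (1 - δ) * (n : ℝ)),
          qAlpha α n k)
          ≤ C * δ ^ (-(2 * (α + 1))) * (n : ℝ) ^ (-α) := by
  obtain ⟨hα0, hα1⟩ := hα
  have hG1 : 0 < Real.Gamma (1 - α) := Real.Gamma_pos_of_pos (by linarith)
  have h1α : (0:ℝ) < 1 - α := by linarith
  refine ⟨3 / ((1 - α) ^ 2 * Real.Gamma (1 - α)), by positivity, ?_⟩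
  rintro δ ⟨hδ0, hδ2⟩
  refine ⟨1, fun n hn => ?_⟩
  have hn0 : (0:ℝ) < (n:ℝ) := by exact_mod_cast hn
  have hδn : (0:ℝ) < δ * n := by positivity
  set K : ℝ := 3 / 2 / ((1 - α) ^ 2 * Real.Gamma (1 - α)) with hK
  have hK0 : 0 ≤ K := by positivity
  set b : ℝ := K * ((δ * n) ^ (-(1+α)) * (δ * n) ^ (-(1+α)) * (n:ℝ) ^ (1+α)) with hb
  have hb0 : 0 ≤ b := by positivity
  set s := (Finset.range (n + 1)).filter
      (fun k : ℕ => δ * (n : ℝ) ≤ (k : ℝ) ∧ (k : ℝ) ≤ (1 - δ) * (n : ℝ)) with hs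
  have hterm : ∀ k ∈ s, qAlpha α n k ≤ b := by
    intro k hks
    rw [hs, Finset.mem_filter] at hks
    obtain ⟨hkr, hk1, hk2⟩ := hks
    have hk01 : 1 ≤ k := by
      by_contra h
      have : k = 0 := by omega
      rw [this] at hk1
      simp at hk1
      linarith
    have hkn : k + 1 ≤ n := by
      have h : (k:ℝ) < (n:ℝ) := by nlinarith
      have : k < n := by exact_mod_cast h
      omega
    have hmcast : ((n - k : ℕ):ℝ) = (n:ℝ) - k := by
      rw [Nat.cast_sub (by omega : k ≤ n)]
    have hmge : δ * n ≤ ((n - k : ℕ):ℝ) := by rw [hmcast]; linarith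
    have hkp : (k:ℝ) ^ (-(1+α)) ≤ (δ * n) ^ (-(1+α)) :=
      Real.rpow_le_rpow_of_nonpos hδn hk1 (by linarith)
    have hmp : ((n - k : ℕ):ℝ) ^ (-(1+α)) ≤ (δ * n) ^ (-(1+α)) :=
      Real.rpow_le_rpow_of_nonpos hδn hmge (by linarith)
    calc qAlpha α n k
        ≤ K * ((k:ℝ) ^ (-(1+α)) * ((n - k : ℕ):ℝ) ^ (-(1+α)) * (n:ℝ) ^ (1+α)) :=
          qAlpha_le hα0 hα1 hk01 hkn
      _ ≤ b := by
          rw [hb]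
          refine mul_le_mul_of_nonneg_left ?_ hK0
          refine mul_le_mul_of_nonneg_right ?_ (Real.rpow_nonneg hn0.le _)
          exact mul_le_mul hkp hmp (Real.rpow_nonneg (Nat.cast_nonneg _) _)
            (Real.rpow_nonneg hδn.le _)
    done
  have hsum := Finset.sum_le_card_nsmul s _ b hterm
  have hcard : (s.card : ℝ) ≤ 2 * n := by
    have h1 : s.card ≤ n + 1 := le_trans (Finset.card_filter_le _ _)
      (le_of_eq (Finset.card_range _))
    have h2 : (s.card : ℝ) ≤ (n:ℝ) + 1 := by exact_mod_cast h1
    have : (1:ℝ) ≤ n := by exact_mod_cast hn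
    linarith
  rw [nsmul_eq_mul] at hsum
  have key : (2 * (n:ℝ)) * b = 3 / ((1 - α) ^ 2 * Real.Gamma (1 - α))
      * δ ^ (-(2 * (α + 1))) * (n:ℝ) ^ (-α) := by
    have hmr : (δ * (n:ℝ)) ^ (-(1+α)) = δ ^ (-(1+α)) * (n:ℝ) ^ (-(1+α)) :=
      Real.mul_rpow hδ0.le hn0.le
    have hδe : δ ^ (-(2 * (α + 1))) = δ ^ (-(1+α)) * δ ^ (-(1+α)) := by
      rw [← Real.rpow_add hδ0]; congr 1; ring
    have hne : (n:ℝ) ^ (-α)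
        = (n:ℝ) ^ (-(1+α)) * (n:ℝ) ^ (-(1+α)) * (n:ℝ) ^ (1+α) * (n:ℝ) := by
      rw [show -α = (-(1+α) + -(1+α) + (1+α)) + 1 by ring,
        Real.rpow_add_one hn0.ne', Real.rpow_add hn0, Real.rpow_add hn0]
    rw [hb, hK, hmr, hδe, hne]
    ring
  calc (∑ k ∈ s, qAlpha α n k) ≤ (s.card : ℝ) * b := hsum
    _ ≤ (2 * (n:ℝ)) * b := mul_le_mul_of_nonneg_right hcard hb0
    _ = _ := key
end

section
/- Let (p_i)_{i≥0} be nonnegative real numbers with ∑_{i≥0} p_i = 1, ∑_{i≥0} i·p_i = 1 and p_1 = 0. Then p_0 > 0 and ∑_{i≥2} i · p_i · (1−p_0)^{i−1} < 1. -/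
/-- Let `(p_i)` be a critical offspring distribution
(nonnegative, total mass 1, mean 1) with `p 1 = 0`.  Then `p 0 > 0` and
`∑_{i≥2} i·p_i·(1−p_0)^{i−1} < 1`. -/
theorem critical_offspring_size_biased_bound (p : ℕ → ℝ)
    (hp0 : ∀ i, 0 ≤ p i) (hsum : HasSum p 1)
    (hmean : HasSum (fun i : ℕ => (i : ℝ) * p i) 1) (hp1 : p 1 = 0) :
    0 < p 0 ∧ (∑' i : ℕ, (i : ℝ) * p i * (1 - p 0) ^ (i - 1)) < 1 := by
  -- p 0 > 0
  have hp0pos : 0 < p 0 := by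
    rcases (hp0 0).lt_or_eq with h | h
    · exact h
    · exfalso
      have h2 : HasSum (fun i : ℕ => 2 * p i) 2 := by
        simpa using hsum.mul_left 2
      have hle : ∀ i : ℕ, 2 * p i ≤ (i : ℝ) * p i := by
        intro i
        match i with
        | 0 => simp [← h]
        | 1 => simp [hp1]
        | (n+2) =>
          have : (2 : ℝ) ≤ ((n + 2 : ℕ) : ℝ) := by
            push_cast; linarith [Nat.cast_nonneg (α := ℝ) n]
          exact mul_le_mul_of_nonneg_right this (hp0 _)
      have := hasSum_le hle h2 hmean
      linarith
  -- there exists i ≥ 2 with p i > 0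
  obtain ⟨i, hi⟩ : ∃ i : ℕ, (i : ℝ) * p i ≠ 0 := by
    by_contra hall
    push_neg at hall
    have : HasSum (fun i : ℕ => (i : ℝ) * p i) 0 := by
      simpa [funext hall] using hasSum_zero
    have := hmean.unique this
    norm_num at this
  have hpi : 0 < p i := (hp0 i).lt_of_ne fun h => hi (by rw [← h]; ring)
  have hi1 : i ≠ 0 := by rintro rfl; simp at hi
  have hi2 : 2 ≤ i := by
    rcases Nat.lt_or_ge i 2 with h | h
    · interval_cases i
      · exact absurd rfl hi1
      · exact absurd hp1 hpi.ne'
    · exact h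
  -- p 0 < 1
  have hfin : p 0 + p i ≤ 1 := by
    have := sum_le_hasSum ({0, i} : Finset ℕ) (fun j _ => hp0 j) hsum
    rwa [Finset.sum_pair (by omega : (0 : ℕ) ≠ i)] at this
  have hq0 : 0 ≤ 1 - p 0 := by linarith
  have hq1 : 1 - p 0 < 1 := by linarith
  refine ⟨hp0pos, ?_⟩
  have hle : ∀ j : ℕ, (j : ℝ) * p j * (1 - p 0) ^ (j - 1) ≤ (j : ℝ) * p j := by
    intro j
    have h1 : (1 - p 0) ^ (j - 1) ≤ 1 := pow_le_one₀ hq0 (by linarith)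
    have h2 : 0 ≤ (j : ℝ) * p j := mul_nonneg (Nat.cast_nonneg j) (hp0 j)
    calc (j : ℝ) * p j * (1 - p 0) ^ (j - 1) ≤ (j : ℝ) * p j * 1 :=
          mul_le_mul_of_nonneg_left h1 h2
      _ = (j : ℝ) * p j := mul_one _
  have hstrict : (i : ℝ) * p i * (1 - p 0) ^ (i - 1) < (i : ℝ) * p i := by
    have hlt : (1 - p 0) ^ (i - 1) < 1 := pow_lt_one₀ hq0 hq1 (by omega)
    have h2 : 0 < (i : ℝ) * p i :=
      mul_pos (by exact_mod_cast Nat.pos_of_ne_zero hi1) hpi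
    calc (i : ℝ) * p i * (1 - p 0) ^ (i - 1) < (i : ℝ) * p i * 1 :=
          mul_lt_mul_of_pos_left hlt h2
      _ = (i : ℝ) * p i := mul_one _
  have hsummf : Summable (fun j : ℕ => (j : ℝ) * p j * (1 - p 0) ^ (j - 1)) :=
    Summable.of_nonneg_of_le
      (fun j => mul_nonneg (mul_nonneg (Nat.cast_nonneg j) (hp0 j)) (pow_nonneg hq0 _))
      hle hmean.summable
  calc (∑' j : ℕ, (j : ℝ) * p j * (1 - p 0) ^ (j - 1))
      < ∑' j : ℕ, (j : ℝ) * p j := Summable.tsum_lt_tsum hle hstrict hsummf hmean.summable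
    _ = 1 := hmean.tsum_eq
end

section
/- Let k > 0 be a real number, set s = √k/(1+√k) and c = 1/(k·(1 + 1/(1+√k))). Define π_0 = c·k, π_1 = 0, and π_i = c·s^i for every integer i ≥ 2. Then ∑_{i≥0} π_i = 1 and ∑_{i≥0} i·π_i = 1; that is, (π_i)_{i≥0} is a probability distribution on ℕ with mean 1. -/
/-!
Apart from the atom `c·k` at `0`, `π` is the geometric tail `c·s^i` (`i ≥ 2`), whose mass and
first moment are `c·s²/(1 - s)` and `c·(s/(1 - s)² - s)`. With `r = √k` these are
`c·k/(1 + r)` and `c·k(2 + r)/(1 + r)`, so `c = (1 + r)/(k(2 + r))` makes both the total mass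
`c·k + c·k/(1 + r)` and the mean equal to `1`.
-/

open Finset

def offspringDist (c k s : ℝ) (i : ℕ) : ℝ :=
  if i = 0 then c * k else if i = 1 then 0 else c * s ^ i

section offspringDist

variable {c k s : ℝ}

@[simp] lemma offspringDist_zero : offspringDist c k s 0 = c * k := rfl

@[simp] lemma offspringDist_one : offspringDist c k s 1 = 0 := rfl

lemma offspringDist_add_two (n : ℕ) : offspringDist c k s (n + 2) = c * s ^ 2 * s ^ n := by
  rw [offspringDist, if_neg (by omega), if_neg (by omega), pow_add]
  ring

lemma hasSum_offspringDist (hs : ‖s‖ < 1) :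
    HasSum (offspringDist c k s) (c * k + c * s ^ 2 / (1 - s)) := by
  have htail : HasSum (fun n ↦ offspringDist c k s (n + 2)) (c * s ^ 2 / (1 - s)) := by
    simpa only [offspringDist_add_two, div_eq_mul_inv] using
      (hasSum_geometric_of_norm_lt_one hs).mul_left (c * s ^ 2)
  simpa [sum_range_succ, add_comm] using (hasSum_nat_add_iff 2).mp htail

lemma hasSum_natCast_mul_offspringDist (hs : ‖s‖ < 1) :
    HasSum (fun i : ℕ ↦ (i : ℝ) * offspringDist c k s i) (c * (s / (1 - s) ^ 2 - s)) := by
  have hgeo : HasSum (fun i : ℕ ↦ c * ((i : ℝ) * s ^ i)) (c * (s / (1 - s) ^ 2)) :=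
    (hasSum_coe_mul_geometric_of_norm_lt_one hs).mul_left c
  have htail : HasSum (fun n : ℕ ↦ ((n + 2 : ℕ) : ℝ) * offspringDist c k s (n + 2))
      (c * (s / (1 - s) ^ 2) - ∑ i ∈ range 2, c * ((i : ℝ) * s ^ i)) := by
    have hterm (n : ℕ) : ((n + 2 : ℕ) : ℝ) * offspringDist c k s (n + 2)
        = c * (((n + 2 : ℕ) : ℝ) * s ^ (n + 2)) := by
      rw [offspringDist_add_two, pow_add]
      ring
    simpa only [hterm] using (hasSum_nat_add_iff' 2).mpr hgeo
  have h := (hasSum_nat_add_iff (f := fun i : ℕ ↦ (i : ℝ) * offspringDist c k s i) 2).mp htail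
  simpa [sum_range_succ, mul_sub] using h

end offspringDist

section associativeWeights

variable {k r : ℝ}

lemma norm_div_one_add_lt_one (hr : 0 ≤ r) : ‖r / (1 + r)‖ < 1 := by
  rw [Real.norm_of_nonneg (by positivity), div_lt_one (by positivity)]
  linarith

lemma associative_mass_eq_one (hr : 0 < r) (hk : r ^ 2 = k) :
    1 / (k * (1 + 1 / (1 + r))) * k
      + 1 / (k * (1 + 1 / (1 + r))) * (r / (1 + r)) ^ 2 / (1 - r / (1 + r)) = 1 := by
  subst hk
  field_simp
  ring

lemma associative_mean_eq_one (hr : 0 < r) (hk : r ^ 2 = k) :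
    1 / (k * (1 + 1 / (1 + r))) * (r / (1 + r) / (1 - r / (1 + r)) ^ 2 - r / (1 + r)) = 1 := by
  subst hk
  field_simp
  ring

end associativeWeights

/-- Let `k > 0`, `s = √k/(1+√k)`,
`c = 1/(k·(1 + 1/(1+√k)))`, and let `π₀ = c·k`, `π₁ = 0`, `π_i = c·s^i` for
`i ≥ 2`.  Then `(π_i)` is a probability distribution on ℕ with mean 1. -/
theorem associative_tree_offspring_critical (k : ℝ) (hk : 0 < k) :
    HasSum
      (fun i : ℕ =>
        if i = 0 then (1 / (k * (1 + 1 / (1 + Real.sqrt k)))) * k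
        else if i = 1 then 0
        else (1 / (k * (1 + 1 / (1 + Real.sqrt k))))
            * (Real.sqrt k / (1 + Real.sqrt k)) ^ i)
      1
    ∧ HasSum
      (fun i : ℕ =>
        (i : ℝ) *
          (if i = 0 then (1 / (k * (1 + 1 / (1 + Real.sqrt k)))) * k
          else if i = 1 then 0
          else (1 / (k * (1 + 1 / (1 + Real.sqrt k))))
              * (Real.sqrt k / (1 + Real.sqrt k)) ^ i))
      1 := by
  have hr : 0 < Real.sqrt k := Real.sqrt_pos.2 hk
  have hr2 : Real.sqrt k ^ 2 = k := Real.sq_sqrt hk.le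
  have hs := norm_div_one_add_lt_one hr.le
  exact ⟨(associative_mass_eq_one hr hr2).subst (motive := HasSum _) (hasSum_offspringDist hs),
    (associative_mean_eq_one hr hr2).subst (motive := HasSum _)
      (hasSum_natCast_mul_offspringDist hs)⟩
end
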